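/- Let G be a complete (m,n)-mixed graph with χ_s(G) > 2, and let u, v be distinct vertices of G. Then conv({u,v}) ≠ V(G) if and only if c(u) = c(v) for every minimum simple colouring c of G (i.e., every simple homomorphism c from G to an (m,n)-mixed graph on χ_s(G) vertices). -/

import Mathlib

/-- An `(m,n)`-mixed graph on vertex type `V`: arcs (ordered pairs of distinct
vertices) coloured by `Fin m` and edges (unordered pairs of distinct vertices)
coloured by `Fin n`, with at most one adjacency between any two vertices.
`arcColor u v = some j` means there is an arc from `u` to `v` of colour `j`;
`edgeColor u v = some i` means there is an edge between `u` and `v` of colour `i`. -/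
structure MixedGraph (m n : ℕ) (V : Type) where
  arcColor : V → V → Option (Fin m)
  edgeColor : V → V → Option (Fin n)
  edge_symm : ∀ u v, edgeColor u v = edgeColor v u
  edge_irrefl : ∀ v, edgeColor v v = none
  arc_asymm : ∀ u v, (arcColor u v).isSome → arcColor v u = none
  arc_not_edge : ∀ u v, (arcColor u v).isSome → edgeColor u v = none

namespace MixedGraph

variable {m n : ℕ} {V W : Type}

/-- Adjacency in the underlying graph `U(G)`. -/
def Adj (G : MixedGraph m n V) (u v : V) : Prop :=
  (G.arcColor u v).isSome ∨ (G.arcColor v u).isSome ∨ (G.edgeColor u v).isSome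

/-- The underlying simple graph `U(G)`. -/
def underlying (G : MixedGraph m n V) : SimpleGraph V where
  Adj := G.Adj
  symm := by
    constructor
    intro u v h
    rcases h with h | h | h
    · exact Or.inr (Or.inl h)
    · exact Or.inl h
    · refine Or.inr (Or.inr ?_)
      rw [G.edge_symm]
      exact h
  loopless := by
    constructor
    intro v h
    rcases h with h | h | h
    · simp [G.arc_asymm v v h] at h
    · simp [G.arc_asymm v v h] at h
    · simp [G.edge_irrefl v] at h

/-- `G` is complete when its underlying graph is a complete graph. -/
def IsComplete (G : MixedGraph m n V) : Prop :=
  ∀ u v : V, u ≠ v → G.Adj u v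

/-- A simple homomorphism of `(m,n)`-mixed graphs: either `G` has one vertex or
`φ` is non-constant, and every arc/edge is mapped to an arc/edge of the same
colour unless its endpoints are identified. -/
def IsSimpleHom [Fintype V] (G : MixedGraph m n V) (H : MixedGraph m n W) (φ : V → W) : Prop :=
  (Fintype.card V = 1 ∨ ∃ x y : V, φ x ≠ φ y) ∧
  (∀ u v : V, ∀ j : Fin m, G.arcColor u v = some j →
      φ u = φ v ∨ H.arcColor (φ u) (φ v) = some j) ∧
  (∀ u v : V, ∀ i : Fin n, G.edgeColor u v = some i →
      φ u = φ v ∨ H.edgeColor (φ u) (φ v) = some i)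

/-- The simple chromatic number `χₛ(G)`: the least `t` such that `G` admits a
simple homomorphism to some `(m,n)`-mixed graph on `t` vertices. -/
noncomputable def simpleChrom [Fintype V] (G : MixedGraph m n V) : ℕ :=
  sInf {t : ℕ | ∃ H : MixedGraph m n (Fin t), ∃ φ : V → Fin t, G.IsSimpleHom H φ}

/-- An (ordinary) homomorphism of `(m,n)`-mixed graphs. -/
def IsHom (G : MixedGraph m n V) (H : MixedGraph m n W) (φ : V → W) : Prop :=
  (∀ u v : V, G.Adj u v → φ u ≠ φ v) ∧
  (∀ u v : V, ∀ j : Fin m, G.arcColor u v = some j → H.arcColor (φ u) (φ v) = some j) ∧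
  (∀ u v : V, ∀ i : Fin n, G.edgeColor u v = some i → H.edgeColor (φ u) (φ v) = some i)

/-- The chromatic number `χ(G)`: the least `t` such that `G` admits a
homomorphism to some `(m,n)`-mixed graph on `t` vertices. -/
noncomputable def chrom (G : MixedGraph m n V) : ℕ :=
  sInf {t : ℕ | ∃ H : MixedGraph m n (Fin t), ∃ φ : V → Fin t, G.IsHom H φ}

/-- `v` is between `u` and `w`: both `u` and `w` are adjacent to `v`, and `u`
and `w` do not agree on `v` (the two adjacencies do not have the same type). -/
def Between (G : MixedGraph m n V) (v u w : V) : Prop :=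
  G.Adj u v ∧ G.Adj w v ∧
  ¬ ((∃ i : Fin n, G.edgeColor u v = some i ∧ G.edgeColor w v = some i) ∨
     (∃ j : Fin m, G.arcColor u v = some j ∧ G.arcColor w v = some j) ∨
     (∃ j : Fin m, G.arcColor v u = some j ∧ G.arcColor v w = some j))

/-- A set of vertices is convex if no vertex outside it is between two of its
vertices. -/
def IsConvex (G : MixedGraph m n V) (C : Set V) : Prop :=
  ∀ u ∈ C, ∀ w ∈ C, ∀ v : V, G.Between v u w → v ∈ C

/-- `conv(N)`: the smallest convex set containing `N`. -/
def conv (G : MixedGraph m n V) (N : Set V) : Set V :=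
  ⋂₀ {C : Set V | G.IsConvex C ∧ N ⊆ C}

end MixedGraph
namespace MixedGraph

variable {m n : ℕ} {V W : Type}

/-- Two vertices `x`, `z` have the same adjacency type towards `p`. -/
def SameType (G : MixedGraph m n V) (x z p : V) : Prop :=
  G.edgeColor x p = G.edgeColor z p ∧ G.arcColor x p = G.arcColor z p ∧
    G.arcColor p x = G.arcColor p z

theorem sameType_trans {G : MixedGraph m n V} {x z w p : V} (h1 : G.SameType x z p)
    (h2 : G.SameType z w p) : G.SameType x w p :=
  ⟨h1.1.trans h2.1, h1.2.1.trans h2.2.1, h1.2.2.trans h2.2.2⟩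

theorem arc_none_of_edge {G : MixedGraph m n V} {x p : V} {i : Fin n}
    (h : G.edgeColor x p = some i) : G.arcColor x p = none := by
  cases hh : G.arcColor x p with
  | none => rfl
  | some j => exact absurd (G.arc_not_edge x p (by simp [hh])) (by simp [h])

theorem arc_rev_none_of_edge {G : MixedGraph m n V} {x p : V} {i : Fin n}
    (h : G.edgeColor x p = some i) : G.arcColor p x = none :=
  arc_none_of_edge (by rw [G.edge_symm]; exact h)

theorem edge_none_of_arc {G : MixedGraph m n V} {x p : V} {j : Fin m}
    (h : G.arcColor x p = some j) : G.edgeColor x p = none :=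
  G.arc_not_edge x p (by simp [h])

theorem edge_rev_none_of_arc {G : MixedGraph m n V} {x p : V} {j : Fin m}
    (h : G.arcColor x p = some j) : G.edgeColor p x = none := by
  rw [G.edge_symm]; exact edge_none_of_arc h

theorem arc_rev_none_of_arc {G : MixedGraph m n V} {x p : V} {j : Fin m}
    (h : G.arcColor x p = some j) : G.arcColor p x = none :=
  G.arc_asymm x p (by simp [h])

theorem sameType_of_agree {G : MixedGraph m n V} {x z p : V}
    (h : (∃ i : Fin n, G.edgeColor x p = some i ∧ G.edgeColor z p = some i) ∨
         (∃ j : Fin m, G.arcColor x p = some j ∧ G.arcColor z p = some j) ∨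
         (∃ j : Fin m, G.arcColor p x = some j ∧ G.arcColor p z = some j)) :
    G.SameType x z p := by
  rcases h with ⟨i, h1, h2⟩ | ⟨j, h1, h2⟩ | ⟨j, h1, h2⟩
  · exact ⟨h1.trans h2.symm, (arc_none_of_edge h1).trans (arc_none_of_edge h2).symm,
      (arc_rev_none_of_edge h1).trans (arc_rev_none_of_edge h2).symm⟩
  · exact ⟨(edge_none_of_arc h1).trans (edge_none_of_arc h2).symm, h1.trans h2.symm,
      (arc_rev_none_of_arc h1).trans (arc_rev_none_of_arc h2).symm⟩
  · exact ⟨(edge_rev_none_of_arc h1).trans (edge_rev_none_of_arc h2).symm,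
      (arc_rev_none_of_arc h1).trans (arc_rev_none_of_arc h2).symm, h1.trans h2.symm⟩

theorem agree_of_sameType {G : MixedGraph m n V} {x z p : V}
    (st : G.SameType x z p) (hadj : G.Adj x p) :
    (∃ i : Fin n, G.edgeColor x p = some i ∧ G.edgeColor z p = some i) ∨
    (∃ j : Fin m, G.arcColor x p = some j ∧ G.arcColor z p = some j) ∨
    (∃ j : Fin m, G.arcColor p x = some j ∧ G.arcColor p z = some j) := by
  rcases hadj with h | h | h
  · obtain ⟨j, hj⟩ := Option.isSome_iff_exists.mp h
    exact Or.inr (Or.inl ⟨j, hj, by rw [← st.2.1]; exact hj⟩)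
  · obtain ⟨j, hj⟩ := Option.isSome_iff_exists.mp h
    exact Or.inr (Or.inr ⟨j, hj, by rw [← st.2.2]; exact hj⟩)
  · obtain ⟨i, hi⟩ := Option.isSome_iff_exists.mp h
    exact Or.inl ⟨i, hi, by rw [← st.1]; exact hi⟩

/-- If `C` is convex, any two of its members look the same from outside. -/
theorem sameType_of_convex {G : MixedGraph m n V} (hcomp : G.IsComplete) {C : Set V}
    (hC : G.IsConvex C) {x z y : V} (hx : x ∈ C) (hz : z ∈ C) (hy : y ∉ C) :
    G.SameType x z y := by
  have hxy : x ≠ y := fun h => hy (h ▸ hx)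
  have hzy : z ≠ y := fun h => hy (h ▸ hz)
  by_contra hst
  -- then y is not between x and z, so they agree; contradiction with ¬SameType
  have hb : ¬ G.Between y x z := fun h => hy (hC x hx z hz y h)
  apply hb
  refine ⟨hcomp x y hxy, hcomp z y hzy, fun hagr => hst (sameType_of_agree hagr)⟩

/-- Fibers of a simple homomorphism of a complete mixed graph: vertices with
equal colour look the same from any vertex of a different colour. -/
theorem sameType_of_fiber [Fintype V] {G : MixedGraph m n V} {H : MixedGraph m n W}
    {c : V → W} (hcomp : G.IsComplete) (hhom : G.IsSimpleHom H c) {x z y : V}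
    (hxz : c x = c z) (hyx : c y ≠ c x) : G.SameType x z y := by
  have hxy : x ≠ y := fun h => hyx (congrArg c h.symm)
  have hzy : z ≠ y := fun h => hyx ((congrArg c h.symm).trans hxz.symm)
  rcases hcomp x y hxy with hx1 | hx1 | hx1 <;> rcases hcomp z y hzy with hz1 | hz1 | hz1
  · -- arc x→y, arc z→y
    obtain ⟨j, hj⟩ := Option.isSome_iff_exists.mp hx1
    obtain ⟨j', hj'⟩ := Option.isSome_iff_exists.mp hz1
    have Hx : H.arcColor (c x) (c y) = some j :=
      (hhom.2.1 x y j hj).resolve_left (fun h => hyx h.symm)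
    have Hz : H.arcColor (c z) (c y) = some j' :=
      (hhom.2.1 z y j' hj').resolve_left (fun h => hyx (h.symm.trans hxz.symm))
    rw [← hxz] at Hz
    obtain rfl : j = j' := Option.some.inj (Hx.symm.trans Hz)
    exact ⟨(edge_none_of_arc hj).trans (edge_none_of_arc hj').symm, hj.trans hj'.symm,
      (arc_rev_none_of_arc hj).trans (arc_rev_none_of_arc hj').symm⟩
  · -- arc x→y, arc y→z
    obtain ⟨j, hj⟩ := Option.isSome_iff_exists.mp hx1
    obtain ⟨j', hj'⟩ := Option.isSome_iff_exists.mp hz1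
    have Hx : H.arcColor (c x) (c y) = some j :=
      (hhom.2.1 x y j hj).resolve_left (fun h => hyx h.symm)
    have Hz : H.arcColor (c y) (c z) = some j' :=
      (hhom.2.1 y z j' hj').resolve_left (fun h => hyx (h.trans hxz.symm))
    rw [← hxz] at Hz
    rw [H.arc_asymm _ _ (by simp [Hx])] at Hz
    exact absurd Hz (by simp)
  · -- arc x→y, edge z y
    obtain ⟨j, hj⟩ := Option.isSome_iff_exists.mp hx1
    obtain ⟨i, hi⟩ := Option.isSome_iff_exists.mp hz1
    have Hx : H.arcColor (c x) (c y) = some j :=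
      (hhom.2.1 x y j hj).resolve_left (fun h => hyx h.symm)
    have Hz : H.edgeColor (c z) (c y) = some i :=
      (hhom.2.2 z y i hi).resolve_left (fun h => hyx (h.symm.trans hxz.symm))
    rw [← hxz] at Hz
    rw [edge_none_of_arc Hx] at Hz
    exact absurd Hz (by simp)
  · -- arc y→x, arc z→y
    obtain ⟨j, hj⟩ := Option.isSome_iff_exists.mp hx1
    obtain ⟨j', hj'⟩ := Option.isSome_iff_exists.mp hz1
    have Hx : H.arcColor (c y) (c x) = some j :=
      (hhom.2.1 y x j hj).resolve_left hyx
    have Hz : H.arcColor (c z) (c y) = some j' :=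
      (hhom.2.1 z y j' hj').resolve_left (fun h => hyx (h.symm.trans hxz.symm))
    rw [← hxz] at Hz
    rw [H.arc_asymm _ _ (by simp [Hz])] at Hx
    exact absurd Hx (by simp)
  · -- arc y→x, arc y→z
    obtain ⟨j, hj⟩ := Option.isSome_iff_exists.mp hx1
    obtain ⟨j', hj'⟩ := Option.isSome_iff_exists.mp hz1
    have Hx : H.arcColor (c y) (c x) = some j :=
      (hhom.2.1 y x j hj).resolve_left hyx
    have Hz : H.arcColor (c y) (c z) = some j' :=
      (hhom.2.1 y z j' hj').resolve_left (fun h => hyx (h.trans hxz.symm))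
    rw [← hxz] at Hz
    obtain rfl : j = j' := Option.some.inj (Hx.symm.trans Hz)
    exact ⟨(edge_rev_none_of_arc hj).trans (edge_rev_none_of_arc hj').symm,
      (arc_rev_none_of_arc hj).trans (arc_rev_none_of_arc hj').symm, hj.trans hj'.symm⟩
  · -- arc y→x, edge z y
    obtain ⟨j, hj⟩ := Option.isSome_iff_exists.mp hx1
    obtain ⟨i, hi⟩ := Option.isSome_iff_exists.mp hz1
    have Hx : H.arcColor (c y) (c x) = some j :=
      (hhom.2.1 y x j hj).resolve_left hyx
    have Hz : H.edgeColor (c z) (c y) = some i :=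
      (hhom.2.2 z y i hi).resolve_left (fun h => hyx (h.symm.trans hxz.symm))
    rw [← hxz] at Hz
    rw [edge_rev_none_of_arc Hx] at Hz
    exact absurd Hz (by simp)
  · -- edge x y, arc z→y
    obtain ⟨i, hi⟩ := Option.isSome_iff_exists.mp hx1
    obtain ⟨j, hj⟩ := Option.isSome_iff_exists.mp hz1
    have Hx : H.edgeColor (c x) (c y) = some i :=
      (hhom.2.2 x y i hi).resolve_left (fun h => hyx h.symm)
    have Hz : H.arcColor (c z) (c y) = some j :=
      (hhom.2.1 z y j hj).resolve_left (fun h => hyx (h.symm.trans hxz.symm))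
    rw [← hxz] at Hz
    rw [edge_none_of_arc Hz] at Hx
    exact absurd Hx (by simp)
  · -- edge x y, arc y→z
    obtain ⟨i, hi⟩ := Option.isSome_iff_exists.mp hx1
    obtain ⟨j, hj⟩ := Option.isSome_iff_exists.mp hz1
    have Hx : H.edgeColor (c x) (c y) = some i :=
      (hhom.2.2 x y i hi).resolve_left (fun h => hyx h.symm)
    have Hz : H.arcColor (c y) (c z) = some j :=
      (hhom.2.1 y z j hj).resolve_left (fun h => hyx (h.trans hxz.symm))
    rw [← hxz] at Hz
    rw [edge_rev_none_of_arc Hz] at Hx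
    exact absurd Hx (by simp)
  · -- edge x y, edge z y
    obtain ⟨i, hi⟩ := Option.isSome_iff_exists.mp hx1
    obtain ⟨i', hi'⟩ := Option.isSome_iff_exists.mp hz1
    have Hx : H.edgeColor (c x) (c y) = some i :=
      (hhom.2.2 x y i hi).resolve_left (fun h => hyx h.symm)
    have Hz : H.edgeColor (c z) (c y) = some i' :=
      (hhom.2.2 z y i' hi').resolve_left (fun h => hyx (h.symm.trans hxz.symm))
    rw [← hxz] at Hz
    obtain rfl : i = i' := Option.some.inj (Hx.symm.trans Hz)
    exact ⟨hi.trans hi'.symm, (arc_none_of_edge hi).trans (arc_none_of_edge hi').symm,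
      (arc_rev_none_of_edge hi).trans (arc_rev_none_of_edge hi').symm⟩

theorem conv_isConvex (G : MixedGraph m n V) (N : Set V) : G.IsConvex (G.conv N) := by
  intro a ha b hb p hp
  intro C' hC'
  exact hC'.1 a (ha C' hC') b (hb C' hC') p hp

theorem subset_conv (G : MixedGraph m n V) (N : Set V) : N ⊆ G.conv N := by
  intro x hx C' hC'
  exact hC'.2 hx

theorem fiber_convex [Fintype V] {G : MixedGraph m n V} {H : MixedGraph m n W} {c : V → W}
    (hcomp : G.IsComplete) (hhom : G.IsSimpleHom H c) (a : W) :
    G.IsConvex (c ⁻¹' {a}) := by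
  intro x hx z hz p hp
  by_contra hpc
  have hxa : c x = a := hx
  have hza : c z = a := hz
  have hpa : c p ≠ c x := by
    intro h; exact hpc (by simp [Set.mem_preimage, h, hxa])
  have st := sameType_of_fiber hcomp hhom (hxa.trans hza.symm) hpa
  exact hp.2.2 (agree_of_sameType st hp.1)

/-- Collapsing a set `D` that looks uniform from outside onto the colour of
`z0 ∈ D` yields another simple homomorphism. -/
theorem collapse_hom [Fintype V] {G : MixedGraph m n V} {H : MixedGraph m n W} {c : V → W}
    (hhom : G.IsSimpleHom H c) (D : Set V) (z0 : V) (hz0 : z0 ∈ D)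
    (hP : ∀ x ∈ D, ∀ y ∉ D, G.SameType x z0 y)
    (y0 : V) (hy0 : y0 ∉ D) (hy0c : c y0 ≠ c z0)
    (c'' : V → W) (h1 : ∀ x ∈ D, c'' x = c z0) (h2 : ∀ x ∉ D, c'' x = c x) :
    G.IsSimpleHom H c'' := by
  refine ⟨Or.inr ⟨z0, y0, ?_⟩, ?_, ?_⟩
  · rw [h1 z0 hz0, h2 y0 hy0]
    exact fun h => hy0c h.symm
  · intro a b j hab
    by_cases ha : a ∈ D <;> by_cases hb : b ∈ D
    · exact Or.inl (by rw [h1 a ha, h1 b hb])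
    · have hst := hP a ha b hb
      have harc : G.arcColor z0 b = some j := by rw [← hst.2.1]; exact hab
      rcases hhom.2.1 z0 b j harc with h | h
      · exact Or.inl (by rw [h1 a ha, h2 b hb]; exact h)
      · exact Or.inr (by rw [h1 a ha, h2 b hb]; exact h)
    · have hst := hP b hb a ha
      have harc : G.arcColor a z0 = some j := by rw [← hst.2.2]; exact hab
      rcases hhom.2.1 a z0 j harc with h | h
      · exact Or.inl (by rw [h2 a ha, h1 b hb]; exact h)
      · exact Or.inr (by rw [h2 a ha, h1 b hb]; exact h)
    · rcases hhom.2.1 a b j hab with h | h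
      · exact Or.inl (by rw [h2 a ha, h2 b hb]; exact h)
      · exact Or.inr (by rw [h2 a ha, h2 b hb]; exact h)
  · intro a b i hab
    by_cases ha : a ∈ D <;> by_cases hb : b ∈ D
    · exact Or.inl (by rw [h1 a ha, h1 b hb])
    · have hst := hP a ha b hb
      have hedge : G.edgeColor z0 b = some i := by rw [← hst.1]; exact hab
      rcases hhom.2.2 z0 b i hedge with h | h
      · exact Or.inl (by rw [h1 a ha, h2 b hb]; exact h)
      · exact Or.inr (by rw [h1 a ha, h2 b hb]; exact h)
    · have hst := hP b hb a ha
      have hedge : G.edgeColor a z0 = some i := by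
        rw [G.edge_symm]
        rw [← hst.1]
        rw [G.edge_symm]; exact hab
      rcases hhom.2.2 a z0 i hedge with h | h
      · exact Or.inl (by rw [h2 a ha, h1 b hb]; exact h)
      · exact Or.inr (by rw [h2 a ha, h1 b hb]; exact h)
    · rcases hhom.2.2 a b i hab with h | h
      · exact Or.inl (by rw [h2 a ha, h2 b hb]; exact h)
      · exact Or.inr (by rw [h2 a ha, h2 b hb]; exact h)

/-- If a simple homomorphism factors through an injection from `Fin k`, then
`χₛ(G) ≤ k`. -/
theorem simpleChrom_le_factor [Fintype V] {G : MixedGraph m n V} {H : MixedGraph m n W}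
    {c : V → W} (hhom : G.IsSimpleHom H c) {k : ℕ} (r : Fin k → W)
    (hr : Function.Injective r) (l : V → Fin k) (hl : ∀ x, r (l x) = c x) :
    G.simpleChrom ≤ k := by
  apply Nat.sInf_le
  refine ⟨⟨fun a b => H.arcColor (r a) (r b), fun a b => H.edgeColor (r a) (r b),
    fun a b => H.edge_symm _ _, fun a => H.edge_irrefl _, fun a b => H.arc_asymm _ _,
    fun a b => H.arc_not_edge _ _⟩, l, ?_, ?_, ?_⟩
  · rcases hhom.1 with h | ⟨x, y, hxy⟩
    · exact Or.inl h
    · exact Or.inr ⟨x, y, fun h => hxy (by rw [← hl x, ← hl y, h])⟩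
  · intro a b j hab
    rcases hhom.2.1 a b j hab with h | h
    · exact Or.inl (hr (by rw [hl a, hl b]; exact h))
    · exact Or.inr (by show H.arcColor (r (l a)) (r (l b)) = some j; rw [hl a, hl b]; exact h)
  · intro a b i hab
    rcases hhom.2.2 a b i hab with h | h
    · exact Or.inl (hr (by rw [hl a, hl b]; exact h))
    · exact Or.inr (by show H.edgeColor (r (l a)) (r (l b)) = some i; rw [hl a, hl b]; exact h)

theorem simpleChrom_attained [Fintype V] (G : MixedGraph m n V) (u v : V) (huv : u ≠ v) :
    ∃ H : MixedGraph m n (Fin G.simpleChrom), ∃ φ : V → Fin G.simpleChrom,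
      G.IsSimpleHom H φ := by
  have hne : {t : ℕ | ∃ H : MixedGraph m n (Fin t), ∃ φ : V → Fin t,
      G.IsSimpleHom H φ}.Nonempty := by
    refine ⟨Fintype.card V, ⟨⟨fun a b => G.arcColor ((Fintype.equivFin V).symm a)
      ((Fintype.equivFin V).symm b),
    fun a b => G.edgeColor ((Fintype.equivFin V).symm a) ((Fintype.equivFin V).symm b),
    fun a b => G.edge_symm _ _, fun a => G.edge_irrefl _, fun a b => G.arc_asymm _ _,
    fun a b => G.arc_not_edge _ _⟩, Fintype.equivFin V, ?_, ?_, ?_⟩⟩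
    · exact Or.inr ⟨u, v, (Fintype.equivFin V).injective.ne huv⟩
    · intro a b j hab
      refine Or.inr ?_
      show G.arcColor ((Fintype.equivFin V).symm ((Fintype.equivFin V) a))
        ((Fintype.equivFin V).symm ((Fintype.equivFin V) b)) = some j
      simpa using hab
    · intro a b i hab
      refine Or.inr ?_
      show G.edgeColor ((Fintype.equivFin V).symm ((Fintype.equivFin V) a))
        ((Fintype.equivFin V).symm ((Fintype.equivFin V) b)) = some i
      simpa using hab
  exact Nat.sInf_mem hne

end MixedGraph

/-- Let `G` be a complete `(m,n)`-mixed graph with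
`χₛ(G) > 2` and let `u ≠ v` be vertices of `G`. Then `conv({u,v}) ≠ V(G)` iff
`c(u) = c(v)` for every minimum simple colouring `c` of `G` (every simple
homomorphism from `G` to an `(m,n)`-mixed graph on `χₛ(G)` vertices). -/
theorem stmt8 {m n : ℕ} {V : Type} [Fintype V] (G : MixedGraph m n V)
    (hcomp : G.IsComplete) (hchi : 2 < G.simpleChrom) (u v : V) (huv : u ≠ v) :
    G.conv {u, v} ≠ Set.univ ↔
      ∀ (W : Type) [Fintype W] (H : MixedGraph m n W) (c : V → W),
        Fintype.card W = G.simpleChrom → G.IsSimpleHom H c → c u = c v := by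
  constructor
  · intro hC Wt _inst H c hcard hhom
    by_contra hne
    classical
    set C := G.conv {u, v} with hCdef
    have hCc : G.IsConvex C := G.conv_isConvex _
    have huC : u ∈ C := G.subset_conv _ (by simp)
    have hvC : v ∈ C := G.subset_conv _ (by simp)
    by_cases hall' : ∀ x, ∃ z ∈ C, c x = c z
    · -- Case B: every colour appears on C
      obtain ⟨w, hwC⟩ := (Set.ne_univ_iff_exists_notMem _).mp hC
      have key : ∀ z0, z0 ∈ C → c z0 ≠ c w → False := by
        intro z0 hz0C hz0w
        set D : Set V := C ∪ {x | c x ≠ c w} with hD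
        have hz0D : z0 ∈ D := Or.inl hz0C
        have hwD : w ∉ D := by
          intro h
          rcases h with h | h
          · exact hwC h
          · exact h rfl
        have hP : ∀ x ∈ D, ∀ y ∉ D, G.SameType x z0 y := by
          intro x hx y hy
          have hyC : y ∉ C := fun h => hy (Or.inl h)
          have hyw : c y = c w := by
            by_contra h
            exact hy (Or.inr h)
          rcases hx with hxC | hxw
          · exact MixedGraph.sameType_of_convex hcomp hCc hxC hz0C hyC
          · obtain ⟨z, hzC, hxz⟩ := hall' x
            have hyx : c y ≠ c x := by
              rw [hyw]
              exact fun h => hxw h.symm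
            exact MixedGraph.sameType_trans
              (MixedGraph.sameType_of_fiber hcomp hhom hxz hyx)
              (MixedGraph.sameType_of_convex hcomp hCc hzC hz0C hyC)
        set c'' : V → Wt := fun x => if x ∈ D then c z0 else c x with hc''
        have hhom'' : G.IsSimpleHom H c'' :=
          MixedGraph.collapse_hom hhom D z0 hz0D hP w hwD
            (fun h => hz0w h.symm) c''
            (fun x hx => if_pos hx) (fun x hx => if_neg hx)
        have hle : G.simpleChrom ≤ 2 := by
          refine MixedGraph.simpleChrom_le_factor hhom''
            (fun i : Fin 2 => if i = 0 then c z0 else c w) ?_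
            (fun x => if x ∈ D then (0 : Fin 2) else 1) ?_
          · intro a b hab
            fin_cases a <;> fin_cases b
            · rfl
            · simp at hab
              exact absurd hab hz0w
            · simp at hab
              exact absurd hab.symm hz0w
            · rfl
          · intro x
            by_cases hx : x ∈ D
            · simp [hc'', hx]
            · have hxw : c x = c w := by
                by_contra h
                exact hx (Or.inr h)
              simp [hc'', hx, hxw]
        omega
      by_cases hcw : c u = c w
      · exact key v hvC (fun h => hne (hcw.trans h.symm))
      · exact key u huC hcw
    · -- Case A: some colour does not appear on C
      push_neg at hall'
      obtain ⟨w, hw⟩ := hall'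
      set D : Set V := {x | ∃ z ∈ C, c x = c z} with hD
      have huD : u ∈ D := ⟨u, huC, rfl⟩
      have hwD : w ∉ D := by
        rintro ⟨z, hz, h⟩
        exact hw z hz h
      have hP : ∀ x ∈ D, ∀ y ∉ D, G.SameType x u y := by
        intro x hx y hy
        obtain ⟨z, hzC, hxz⟩ := hx
        have hyC : y ∉ C := fun h => hy ⟨y, h, rfl⟩
        have hyx : c y ≠ c x := fun h => hy ⟨z, hzC, h.trans hxz⟩
        exact MixedGraph.sameType_trans
          (MixedGraph.sameType_of_fiber hcomp hhom hxz hyx)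
          (MixedGraph.sameType_of_convex hcomp hCc hzC huC hyC)
      set c'' : V → Wt := fun x => if x ∈ D then c u else c x with hc''
      have hhom'' : G.IsSimpleHom H c'' :=
        MixedGraph.collapse_hom hhom D u huD hP w hwD (hw u huC) c''
          (fun x hx => if_pos hx) (fun x hx => if_neg hx)
      have havoid : ∀ x, c'' x ≠ c v := by
        intro x
        by_cases hx : x ∈ D
        · simp only [hc'', hx, if_pos]
          exact hne
        · simp only [hc'', hx, if_neg, if_false]
          exact fun h => hx ⟨v, hvC, h⟩
      set S := {a : Wt // a ≠ c v} with hS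
      have hle : G.simpleChrom ≤ Fintype.card S := by
        refine MixedGraph.simpleChrom_le_factor hhom''
          (fun i => ((Fintype.equivFin S).symm i).val) ?_
          (fun x => Fintype.equivFin S ⟨c'' x, havoid x⟩) ?_
        · intro a b hab
          exact (Fintype.equivFin S).symm.injective (Subtype.coe_injective hab)
        · intro x
          simp
      have hlt : Fintype.card S < Fintype.card Wt :=
        Fintype.card_subtype_lt (x := c v) (by simp)
      omega
  · intro hall huniv
    classical
    obtain ⟨H₀, φ₀, hφ₀⟩ := G.simpleChrom_attained u v huv
    have heq : φ₀ u = φ₀ v := hall _ H₀ φ₀ (by simp) hφ₀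
    have hconv : G.conv {u, v} ⊆ φ₀ ⁻¹' {φ₀ u} := by
      apply Set.sInter_subset_of_mem
      refine ⟨MixedGraph.fiber_convex hcomp hφ₀ _, ?_⟩
      intro x hx
      rcases hx with rfl | rfl
      · rfl
      · exact heq.symm
    rw [huniv] at hconv
    have hconst : ∀ x, φ₀ x = φ₀ u := fun x => hconv (Set.mem_univ x)
    rcases hφ₀.1 with h1 | ⟨x, y, hxy⟩
    · have : Subsingleton V := Fintype.card_le_one_iff_subsingleton.mp (le_of_eq h1)
      exact huv (Subsingleton.elim u v)
    · exact hxy ((hconst x).trans (hconst y).symm)
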